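/- arXiv:1708.06543 — 3 statements merged into one kernel-verified Lean document; each statement's English description precedes it below -/
import Mathlib

section
/- (Stein/Bussgang lemma for the Gaussian measure.) Let v > 0 and let μ be the centered Gaussian measure on ℝ with mean 0 and variance v. Let f : ℝ → ℝ be differentiable, suppose that x ↦ x·f(x) is μ-integrable, that the derivative f′ is μ-integrable, and that f(x)·exp(−x²/(2v)) tends to 0 as x → +∞ and as x → −∞. Then ∫ x·f(x) dμ(x) = v · ∫ f′(x) dμ(x). -/
open MeasureTheory ProbabilityTheory Filter
open scoped NNReal

/-! The Gaussian density `φ` satisfies `φ' x = -((x - m) / v) * φ x`, so integrating `f * φ'` by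
parts over `ℝ` turns `∫ (x - m) * f x * φ x` into `v * ∫ f' x * φ x`; the boundary terms are the
limits of `f * φ` at `±∞`, which vanish by assumption. -/

namespace ProbabilityTheory

variable {m : ℝ} {v : ℝ≥0}

lemma hasDerivAt_gaussianPDFReal (m : ℝ) (v : ℝ≥0) (x : ℝ) :
    HasDerivAt (gaussianPDFReal m v) (-((x - m) / v) * gaussianPDFReal m v x) x := by
  have hsq : HasDerivAt (fun y => -(y - m) ^ 2 / (2 * v)) (-(2 * (x - m)) / (2 * v)) x := by
    simpa using (((hasDerivAt_id x).sub_const m).pow 2).neg.div_const (2 * (v : ℝ))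
  rw [neg_div, mul_div_mul_left _ _ two_ne_zero] at hsq
  rw [gaussianPDFReal_def]
  exact (hsq.exp.const_mul _).congr_deriv (by ring)

lemma integrable_gaussianReal_iff {E : Type*} [NormedAddCommGroup E] [NormedSpace ℝ E]
    (hv : v ≠ 0) {g : ℝ → E} :
    Integrable g (gaussianReal m v) ↔ Integrable (fun x => gaussianPDFReal m v x • g x) := by
  rw [gaussianReal_of_var_ne_zero _ hv, integrable_withDensity_iff_integrable_smul'
    (measurable_gaussianPDF m v) (ae_of_all _ fun _ => gaussianPDF_lt_top)]
  simp only [toReal_gaussianPDF]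

lemma tendsto_mul_gaussianPDFReal {l : Filter ℝ} {f : ℝ → ℝ}
    (h : Tendsto (fun x => f x * Real.exp (-(x - m) ^ 2 / (2 * v))) l (nhds 0)) :
    Tendsto (fun x => f x * gaussianPDFReal m v x) l (nhds 0) := by
  simpa [gaussianPDFReal, mul_left_comm] using h.const_mul (√(2 * Real.pi * v))⁻¹

theorem integral_sub_mul_gaussianReal {f : ℝ → ℝ} (hf : Differentiable ℝ f)
    (hxf : Integrable (fun x => (x - m) * f x) (gaussianReal m v))
    (hf' : Integrable (deriv f) (gaussianReal m v))
    (htop : Tendsto (fun x => f x * gaussianPDFReal m v x) atTop (nhds 0))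
    (hbot : Tendsto (fun x => f x * gaussianPDFReal m v x) atBot (nhds 0)) :
    ∫ x, (x - m) * f x ∂gaussianReal m v = v * ∫ x, deriv f x ∂gaussianReal m v := by
  rcases eq_or_ne v 0 with rfl | hv
  · simp
  have hφxf := (integrable_gaussianReal_iff hv).1 hxf
  have hφf' := (integrable_gaussianReal_iff hv).1 hf'
  have hfφ' : Integrable (f * fun x => -((x - m) / v) * gaussianPDFReal m v x) := by
    refine (hφxf.const_mul (-(v : ℝ)⁻¹)).congr (ae_of_all _ fun x => ?_)
    simp only [smul_eq_mul, Pi.mul_apply]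
    ring
  have hf'φ : Integrable (deriv f * gaussianPDFReal m v) := by
    refine hφf'.congr (ae_of_all _ fun x => ?_)
    simp only [smul_eq_mul, Pi.mul_apply, mul_comm]
  have hparts := integral_mul_deriv_eq_deriv_mul (fun x _ => (hf x).hasDerivAt)
    (fun x _ => hasDerivAt_gaussianPDFReal m v x) hfφ' hf'φ hbot htop
  have hLHS : ∫ x, f x * (-((x - m) / v) * gaussianPDFReal m v x)
      = -(v : ℝ)⁻¹ * ∫ x, gaussianPDFReal m v x * ((x - m) * f x) := by
    rw [← integral_const_mul]
    congr 1 with x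
    ring
  simp only [integral_gaussianReal_eq_integral_smul hv, smul_eq_mul]
  rw [hLHS, sub_self, zero_sub] at hparts
  simp_rw [mul_comm (deriv f _)] at hparts
  rwa [neg_mul, neg_inj, inv_mul_eq_iff_eq_mul₀ (NNReal.coe_ne_zero.2 hv)] at hparts

end ProbabilityTheory

theorem stein_bussgang_lemma_general (v : ℝ≥0)
    (f : ℝ → ℝ) (hf : Differentiable ℝ f)
    (hxf : Integrable (fun x => x * f x) (gaussianReal 0 v))
    (hf' : Integrable (deriv f) (gaussianReal 0 v))
    (htop : Tendsto (fun x : ℝ => f x * Real.exp (-x ^ 2 / (2 * (v : ℝ)))) atTop (nhds 0))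
    (hbot : Tendsto (fun x : ℝ => f x * Real.exp (-x ^ 2 / (2 * (v : ℝ)))) atBot (nhds 0)) :
    ∫ x, x * f x ∂(gaussianReal 0 v) = (v : ℝ) * ∫ x, deriv f x ∂(gaussianReal 0 v) := by
  simpa using integral_sub_mul_gaussianReal hf (by simpa using hxf) hf'
    (tendsto_mul_gaussianPDFReal (by simpa using htop))
    (tendsto_mul_gaussianPDFReal (by simpa using hbot))

/-- Stein/Bussgang lemma for the centered Gaussian measure with variance `v > 0`:
`∫ x * f x ∂μ = v * ∫ f' x ∂μ` for a differentiable `f` with `x ↦ x * f x` and `f'`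
`μ`-integrable and `f x * exp (-x²/(2v)) → 0` as `x → ±∞`. -/
theorem stein_bussgang_lemma (v : ℝ≥0) (hv : 0 < v)
    (f : ℝ → ℝ) (hf : Differentiable ℝ f)
    (hxf : Integrable (fun x => x * f x) (gaussianReal 0 v))
    (hf' : Integrable (deriv f) (gaussianReal 0 v))
    (htop : Tendsto (fun x : ℝ => f x * Real.exp (-x ^ 2 / (2 * (v : ℝ)))) atTop (nhds 0))
    (hbot : Tendsto (fun x : ℝ => f x * Real.exp (-x ^ 2 / (2 * (v : ℝ)))) atBot (nhds 0)) :
    ∫ x, x * f x ∂(gaussianReal 0 v) = (v : ℝ) * ∫ x, deriv f x ∂(gaussianReal 0 v) :=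
  stein_bussgang_lemma_general v f hf hxf hf' htop hbot
end

section
/- Let v > 0 and let μ be the centered Gaussian measure on ℝ with mean 0 and variance v. Let n_br ≥ 1, let h, s : Fin n_br → ℝ with hᵢ ≠ 0 for all i, and let f₁,…,f_{n_br} : ℝ → ℝ be such that x ↦ fᵢ(hᵢ·x) is in L²(μ) for each i. Define the static parallel Wiener–Hammerstein output y(x) = ∑_{i=1}^{n_br} sᵢ · fᵢ(hᵢ·x) and the branch gains αᵢ = (∫ x·fᵢ(hᵢ·x) dμ(x)) / (hᵢ·v). Then the function a ↦ ∫ (y(x) − a·x)² dμ(x) attains its unique global minimum at a₀ = ∑_{i=1}^{n_br} αᵢ·hᵢ·sᵢ. (This is the static-gain form of Theorem 1: the best linear approximation of a parallel Wiener–Hammerstein system is the sum over branches of αᵢ·Hᵢ·Sᵢ.) -/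
/-!
For `X ~ N(0, v)`, completing the square in `a` gives
`E[(y X - a X)²] = E[(y X - b X)²] + (a - b)² E[X²]` whenever `E[X · y X] = b E[X²]`, and
`E[X²] = v > 0`, so such a `b` is the unique minimizer. By linearity
`E[X · y X] = ∑ i, sᵢ E[X fᵢ(hᵢ X)]`, and each term equals `αᵢ hᵢ v` by the definition of `αᵢ`,
whence `b = ∑ i, αᵢ hᵢ sᵢ`.
-/

open MeasureTheory ProbabilityTheory
open scoped NNReal

section LeastSquares

variable {Ω : Type*} {mΩ : MeasurableSpace Ω} {μ : Measure Ω} {X Y : Ω → ℝ}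

lemma integral_sub_mul_sq_eq_add (hX : MemLp X 2 μ) (hY : MemLp Y 2 μ) {b : ℝ}
    (hb : ∫ ω, X ω * Y ω ∂μ = b * ∫ ω, X ω ^ 2 ∂μ) (a : ℝ) :
    ∫ ω, (Y ω - a * X ω) ^ 2 ∂μ =
      ∫ ω, (Y ω - b * X ω) ^ 2 ∂μ + (a - b) ^ 2 * ∫ ω, X ω ^ 2 ∂μ := by
  have hres : Integrable (fun ω => (Y ω - b * X ω) ^ 2) μ :=
    (hY.sub (hX.const_mul b)).integrable_sq
  have hcross : Integrable (fun ω => 2 * (b - a) * (X ω * Y ω)) μ :=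
    (hX.integrable_mul hY).const_mul _
  have hsq : Integrable (fun ω => (a ^ 2 - b ^ 2) * X ω ^ 2) μ := hX.integrable_sq.const_mul _
  have hrest : Integrable (fun ω => 2 * (b - a) * (X ω * Y ω) + (a ^ 2 - b ^ 2) * X ω ^ 2) μ :=
    hcross.add hsq
  calc ∫ ω, (Y ω - a * X ω) ^ 2 ∂μ
      = ∫ ω, (Y ω - b * X ω) ^ 2 + (2 * (b - a) * (X ω * Y ω) + (a ^ 2 - b ^ 2) * X ω ^ 2) ∂μ :=
        integral_congr_ae (Filter.Eventually.of_forall fun ω => by ring)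
    _ = ∫ ω, (Y ω - b * X ω) ^ 2 ∂μ
          + (2 * (b - a) * ∫ ω, X ω * Y ω ∂μ + (a ^ 2 - b ^ 2) * ∫ ω, X ω ^ 2 ∂μ) := by
        rw [integral_add hres hrest, integral_add hcross hsq, integral_const_mul,
          integral_const_mul]
    _ = ∫ ω, (Y ω - b * X ω) ^ 2 ∂μ + (a - b) ^ 2 * ∫ ω, X ω ^ 2 ∂μ := by
        rw [hb]
        ring

lemma integral_sub_mul_sq_lt (hX : MemLp X 2 μ) (hY : MemLp Y 2 μ) (hX₂ : 0 < ∫ ω, X ω ^ 2 ∂μ)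
    {b : ℝ} (hb : ∫ ω, X ω * Y ω ∂μ = b * ∫ ω, X ω ^ 2 ∂μ) {a : ℝ} (ha : a ≠ b) :
    ∫ ω, (Y ω - b * X ω) ^ 2 ∂μ < ∫ ω, (Y ω - a * X ω) ^ 2 ∂μ := by
  rw [integral_sub_mul_sq_eq_add hX hY hb a]
  have : 0 < (a - b) ^ 2 * ∫ ω, X ω ^ 2 ∂μ := mul_pos (by positivity [sub_ne_zero.mpr ha]) hX₂
  linarith

lemma integral_mul_sum_mul {ι : Type*} (t : Finset ι) (c : ι → ℝ) (g : ι → Ω → ℝ)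
    (hg : ∀ i ∈ t, Integrable (fun ω => X ω * g i ω) μ) :
    ∫ ω, X ω * ∑ i ∈ t, c i * g i ω ∂μ = ∑ i ∈ t, c i * ∫ ω, X ω * g i ω ∂μ := by
  calc ∫ ω, X ω * ∑ i ∈ t, c i * g i ω ∂μ = ∫ ω, ∑ i ∈ t, c i * (X ω * g i ω) ∂μ := by
        simp_rw [Finset.mul_sum, mul_left_comm]
    _ = ∑ i ∈ t, c i * ∫ ω, X ω * g i ω ∂μ := by
        simp_rw [integral_finsetSum _ fun i hi => (hg i hi).const_mul (c i), integral_const_mul]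

end LeastSquares

lemma integral_sq_gaussianReal (m : ℝ) (v : ℝ≥0) : ∫ x, x ^ 2 ∂gaussianReal m v = v + m ^ 2 := by
  have := variance_eq_sub (memLp_id_gaussianReal (μ := m) (v := v) 2)
  rw [variance_id_gaussianReal] at this
  simp only [Pi.pow_apply, id_eq, integral_id_gaussianReal] at this
  linarith

theorem parallel_WH_static_bla_general (v : ℝ≥0) (hv : 0 < v) (n_br : ℕ)
    (h s : Fin n_br → ℝ) (hh : ∀ i, h i ≠ 0) (f : Fin n_br → ℝ → ℝ)
    (hf : ∀ i, MemLp (fun x => f i (h i * x)) 2 (gaussianReal 0 v))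
    (y : ℝ → ℝ) (hy : ∀ x, y x = ∑ i, s i * f i (h i * x))
    (α : Fin n_br → ℝ)
    (hα : ∀ i, α i = (∫ x, x * f i (h i * x) ∂(gaussianReal 0 v)) / (h i * (v : ℝ)))
    (a₀ : ℝ) (ha₀ : a₀ = ∑ i, α i * h i * s i) :
    ∀ a : ℝ, a ≠ a₀ →
      ∫ x, (y x - a₀ * x) ^ 2 ∂(gaussianReal 0 v) <
        ∫ x, (y x - a * x) ^ 2 ∂(gaussianReal 0 v) := by
  intro a ha
  have hX : MemLp (fun x : ℝ => x) 2 (gaussianReal 0 v) := memLp_id_gaussianReal 2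
  have hX₂ : ∫ x, x ^ 2 ∂gaussianReal 0 v = v := by simp [integral_sq_gaussianReal]
  have hy' : y = fun x => ∑ i, s i * f i (h i * x) := funext hy
  have hY : MemLp y 2 (gaussianReal 0 v) :=
    hy' ▸ memLp_finsetSum _ fun i _ => (hf i).const_mul (s i)
  have hbranch : ∀ i, ∫ x, x * f i (h i * x) ∂gaussianReal 0 v = α i * h i * v := fun i => by
    rw [hα i, mul_assoc, div_mul_cancel₀ _ (mul_ne_zero (hh i) (NNReal.coe_ne_zero.mpr hv.ne'))]
  have hcross : ∫ x, x * y x ∂gaussianReal 0 v = a₀ * ∫ x, x ^ 2 ∂gaussianReal 0 v := by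
    rw [hy', integral_mul_sum_mul _ _ _ fun i _ => hX.integrable_mul (hf i), hX₂, ha₀,
      Finset.sum_mul]
    exact Finset.sum_congr rfl fun i _ => by rw [hbranch]; ring
  exact integral_sub_mul_sq_lt hX hY (hX₂ ▸ NNReal.coe_pos.mpr hv) hcross ha

/-- Static-gain form of Theorem 1: the best linear approximation of a (static) parallel
Wiener–Hammerstein system `y x = ∑ i, s i * f i (h i * x)` under a zero-mean Gaussian
input with variance `v > 0` is `a₀ = ∑ i, α i * h i * s i`, where
`α i = (∫ x * f i (h i * x) ∂μ) / (h i * v)` is the Bussgang gain of branch `i`;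
`a₀` is the unique global minimizer of the mean square error. -/
theorem parallel_WH_static_bla (v : ℝ≥0) (hv : 0 < v) (n_br : ℕ) (hn : 1 ≤ n_br)
    (h s : Fin n_br → ℝ) (hh : ∀ i, h i ≠ 0) (f : Fin n_br → ℝ → ℝ)
    (hf : ∀ i, MemLp (fun x => f i (h i * x)) 2 (gaussianReal 0 v))
    (y : ℝ → ℝ) (hy : ∀ x, y x = ∑ i, s i * f i (h i * x))
    (α : Fin n_br → ℝ)
    (hα : ∀ i, α i = (∫ x, x * f i (h i * x) ∂(gaussianReal 0 v)) / (h i * (v : ℝ)))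
    (a₀ : ℝ) (ha₀ : a₀ = ∑ i, α i * h i * s i) :
    ∀ a : ℝ, a ≠ a₀ →
      ∫ x, (y x - a₀ * x) ^ 2 ∂(gaussianReal 0 v) <
        ∫ x, (y x - a * x) ^ 2 ∂(gaussianReal 0 v) :=
  parallel_WH_static_bla_general v hv n_br h s hh f hf y hy α hα a₀ ha₀
end

section
/- (Linear-transformation degeneracy of a parallel Wiener–Hammerstein model.) Let F = (ℤ → ℝ) be the space of discrete-time signals, let n ≥ 1, let H, S : Fin n → (F →ₗ[ℝ] F) be the front and back linear blocks, and let g : (Fin n → ℝ) → (Fin n → ℝ) be a MIMO static nonlinearity applied pointwise in time. Define the model output Φ(H,g,S)(u)(t) = ∑_{i} Sᵢ(τ ↦ g(j ↦ (Hⱼ u)(τ))ᵢ)(t). Let T and U be invertible n × n real matrices, and define the transformed model by H′ᵢ = ∑ⱼ Tᵢⱼ • Hⱼ, g′(z) = U·g(T⁻¹·z) (matrix–vector products), and S′ᵢ = ∑ⱼ (U⁻¹)ⱼᵢ • Sⱼ. Then for every input u : ℤ → ℝ, Φ(H′,g′,S′)(u) = Φ(H,g,S)(u). Hence infinitely many equivalent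 parallel Wiener–Hammerstein models are obtained by full-rank linear transformations between the front LTI blocks and the static nonlinearity and between the static nonlinearity and the back LTI blocks. -/
/-!
Mixing the front blocks by a matrix `T` only changes coordinates of the intermediate signal
vector, so it is absorbed by precomposing the nonlinearity with `T`; mixing the back blocks by
`V` passes through the linear maps `S j`, so it is absorbed by postcomposing the nonlinearity
with `V`. For the transformed model these two absorptions cancel `T⁻¹` and `U`.
-/

/-- Output of a parallel Wiener–Hammerstein model with `n` branches: front linear blocks
`H i`, a MIMO static nonlinearity `g` applied pointwise in time, and back linear blocks
`S i`; the output is the sum over branches of `S i` applied to the `i`-th output of `g`. -/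
def parWHOutput (n : ℕ) (H S : Fin n → ((ℤ → ℝ) →ₗ[ℝ] (ℤ → ℝ)))
    (g : (Fin n → ℝ) → (Fin n → ℝ)) (u : ℤ → ℝ) : ℤ → ℝ :=
  fun t => ∑ i, (S i) (fun τ => g (fun j => (H j u) τ) i) t

open Matrix

section Transformations

variable {n : ℕ} (H S : Fin n → ((ℤ → ℝ) →ₗ[ℝ] (ℤ → ℝ))) (g : (Fin n → ℝ) → (Fin n → ℝ))

theorem parWHOutput_front_transform (T : Matrix (Fin n) (Fin n) ℝ) (u : ℤ → ℝ) :
    parWHOutput n (fun i => ∑ j, T i j • H j) S g u =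
      parWHOutput n H S (fun z => g (T *ᵥ z)) u := by
  have intermediate : ∀ τ, (fun i => (∑ j, T i j • H j) u τ) = T *ᵥ fun j => H j u τ := by
    intro τ
    funext i
    simp [mulVec, dotProduct, LinearMap.sum_apply, Finset.sum_apply]
  unfold parWHOutput
  simp_rw [intermediate]

theorem parWHOutput_back_transform (V : Matrix (Fin n) (Fin n) ℝ) (u : ℤ → ℝ) :
    parWHOutput n H (fun i => ∑ j, V j i • S j) g u =
      parWHOutput n H S (fun z => V *ᵥ g z) u := by
  ext t
  set f : Fin n → ℤ → ℝ := fun i τ => g (fun j => H j u τ) i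
  have branch : ∀ j, (fun τ => (V *ᵥ g fun k => H k u τ) j) = ∑ i, V j i • f i := by
    intro j
    ext τ
    simp [f, mulVec, dotProduct, Finset.sum_apply]
  calc ∑ i, (∑ j, V j i • S j) (f i) t
      = ∑ i, ∑ j, V j i * S j (f i) t := by
        simp [LinearMap.sum_apply, Finset.sum_apply]
    _ = ∑ j, ∑ i, V j i * S j (f i) t := Finset.sum_comm
    _ = ∑ j, S j (fun τ => (V *ᵥ g fun k => H k u τ) j) t := by
        simp [branch, map_sum, Finset.sum_apply]

end Transformations

theorem parWH_linear_transformation_degeneracy_general (n : ℕ)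
    (H S : Fin n → ((ℤ → ℝ) →ₗ[ℝ] (ℤ → ℝ))) (g : (Fin n → ℝ) → (Fin n → ℝ))
    (T U : Matrix (Fin n) (Fin n) ℝ) (hT : IsUnit T.det) (hU : IsUnit U.det)
    (H' S' : Fin n → ((ℤ → ℝ) →ₗ[ℝ] (ℤ → ℝ))) (g' : (Fin n → ℝ) → (Fin n → ℝ))
    (hH' : ∀ i, H' i = ∑ j, T i j • H j)
    (hg' : ∀ z, g' z = U.mulVec (g (T⁻¹.mulVec z)))
    (hS' : ∀ i, S' i = ∑ j, (U⁻¹) j i • S j) :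
    ∀ u : ℤ → ℝ, parWHOutput n H' S' g' u = parWHOutput n H S g u := by
  intro u
  have undo : (fun z => U⁻¹ *ᵥ g' (T *ᵥ z)) = g := by
    ext z : 1
    rw [hg', mulVec_mulVec, nonsing_inv_mul U hU, one_mulVec, mulVec_mulVec,
      nonsing_inv_mul T hT, one_mulVec]
  rw [funext hH', funext hS', parWHOutput_front_transform, parWHOutput_back_transform, undo]

/-- Linear-transformation degeneracy of a parallel Wiener–Hammerstein model: for
invertible matrices `T` and `U`, transforming the front blocks by `T`, the MIMO static
nonlinearity by `z ↦ U · g (T⁻¹ · z)`, and the back blocks by `U⁻¹` yields a model with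
identical input–output behavior. -/
theorem parWH_linear_transformation_degeneracy (n : ℕ) (hn : 1 ≤ n)
    (H S : Fin n → ((ℤ → ℝ) →ₗ[ℝ] (ℤ → ℝ))) (g : (Fin n → ℝ) → (Fin n → ℝ))
    (T U : Matrix (Fin n) (Fin n) ℝ) (hT : IsUnit T.det) (hU : IsUnit U.det)
    (H' S' : Fin n → ((ℤ → ℝ) →ₗ[ℝ] (ℤ → ℝ))) (g' : (Fin n → ℝ) → (Fin n → ℝ))
    (hH' : ∀ i, H' i = ∑ j, T i j • H j)
    (hg' : ∀ z, g' z = U.mulVec (g (T⁻¹.mulVec z)))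
    (hS' : ∀ i, S' i = ∑ j, (U⁻¹) j i • S j) :
    ∀ u : ℤ → ℝ, parWHOutput n H' S' g' u = parWHOutput n H S g u :=
  parWH_linear_transformation_degeneracy_general n H S g T U hT hU H' S' g' hH' hg' hS'
end
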